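/- arXiv:2008.01255 — 3 statements merged into one kernel-verified Lean document; each statement's English description precedes it below -/
import Mathlib

section
/- The entries of Ẑ = B̂ D̂^{-1} B̂^T are sums of line impedances over common root paths: for non-root nodes i, j and phases φ ∈ M_i, ψ ∈ M_j, Ẑ_{(i,φ),(j,ψ)} = Σ_{e ∈ E_i ∩ E_j} (Z_e)_{φψ}, where (Z_e)_{φψ} is taken to be 0 if φ ∉ M_e or ψ ∉ M_e. -/
open Finset

/-!
Row `(i, φ)` of `B̂` is `-1` exactly at the columns `(e, φ)` with `e ∈ E_i` (these are columns
because `φ ∈ M_e` along the root path of `i`), so multiplying by `B̂` on either side sums the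
entries over `E_i` and flips the sign. As `D̂⁻¹` is block diagonal, `(B̂ D̂⁻¹)_{(i,φ),(e,ψ)}` is
`-(Z_e)_{φψ}` for `e ∈ E_i` and `0` otherwise, and a second multiplication by `B̂ᵀ` leaves the
sum of `(Z_e)_{φψ}` over `e ∈ E_i ∩ E_j`.
-/

section PairSubtype

variable {α β R : Type*} [Fintype α] [Fintype β] [DecidableEq α] [DecidableEq β]
  [AddCommMonoid R]

theorem sum_subtype_pairs (s : Finset α) (M : α → Finset β) (f : α × β → R) :
    ∑ q : {q : α × β // q.1 ∈ s ∧ q.2 ∈ M q.1}, f q.1 = ∑ e ∈ s, ∑ φ ∈ M e, f (e, φ) := by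
  rw [← sum_subtype ((s ×ˢ univ).filter fun q : α × β => q.2 ∈ M q.1)
    (fun q => by simp only [mem_filter, mem_product, mem_univ, and_true]) f,
    sum_filter, sum_product]
  exact sum_congr rfl fun e _ => by simp only [sum_ite_mem, univ_inter]

theorem sum_subtype_pairs_ite_fst_mem (s S : Finset α) (M : α → Finset β) (φ : β)
    (hS : S ⊆ s) (hφ : ∀ e ∈ S, φ ∈ M e) (f : α × β → R) :
    ∑ q : {q : α × β // q.1 ∈ s ∧ q.2 ∈ M q.1},
        (if φ = q.1.2 ∧ q.1.1 ∈ S then f q.1 else 0) = ∑ e ∈ S, f (e, φ) := by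
  rw [sum_subtype_pairs s M fun q => if φ = q.2 ∧ q.1 ∈ S then f q else 0]
  calc ∑ e ∈ s, ∑ χ ∈ M e, (if φ = χ ∧ e ∈ S then f (e, χ) else 0)
      = ∑ e ∈ s, if e ∈ S then f (e, φ) else 0 := by
        refine sum_congr rfl fun e _ => ?_
        by_cases he : e ∈ S
        · simp only [he, and_true, if_true]
          exact (sum_ite_eq (M e) φ _).trans (if_pos (hφ e he))
        · simp only [he, and_false, if_false, sum_const_zero]
    _ = ∑ e ∈ S, f (e, φ) := by rw [sum_ite_mem, inter_eq_right.mpr hS]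

end PairSubtype

theorem Zhat_entries_eq_common_path_impedance_general
    {V : Type*} [Fintype V] [DecidableEq V]
    (G : SimpleGraph V) [DecidableRel G.Adj] (r : V)
    -- the unique path from each node to the root, and its edge set `E_i`
    (P : ∀ i : V, G.Walk i r)
    (Epath : V → Finset (Sym2 V)) (hE : ∀ i, Epath i = (P i).edges.toFinset)
    -- phase sets of nodes and edges
    (Mn : V → Finset (Fin 3)) (Me : Sym2 V → Finset (Fin 3))
    (hMono : ∀ i : V, ∀ φ ∈ Mn i, ∀ e ∈ Epath i, φ ∈ Me e)
    -- line admittance matrices `Y_e` and their inverses `Z_e = Y_e⁻¹`,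
    -- supported on the edge phase sets and mutually inverse there
    (Zmat : Sym2 V → Matrix (Fin 3) (Fin 3) ℂ)
    -- the matrix B̂
    (Bhat : Matrix {p : V × Fin 3 // p.1 ≠ r ∧ p.2 ∈ Mn p.1}
      {q : Sym2 V × Fin 3 // q.1 ∈ G.edgeFinset ∧ q.2 ∈ Me q.1} ℂ)
    (hB : ∀ p q, Bhat p q =
      if p.1.2 = q.1.2 ∧ q.1.1 ∈ Epath p.1.1 then -1 else 0)
    -- the block-diagonal matrix D̂⁻¹ of line impedances
    (Dinv : Matrix {q : Sym2 V × Fin 3 // q.1 ∈ G.edgeFinset ∧ q.2 ∈ Me q.1}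
      {q : Sym2 V × Fin 3 // q.1 ∈ G.edgeFinset ∧ q.2 ∈ Me q.1} ℂ)
    (hDinv : ∀ q q', Dinv q q' =
      if q.1.1 = q'.1.1 then Zmat q.1.1 q.1.2 q'.1.2 else 0) :
    ∀ p p' : {p : V × Fin 3 // p.1 ≠ r ∧ p.2 ∈ Mn p.1},
      (Bhat * Dinv * Bhat.transpose) p p' =
        ∑ e ∈ Epath p.1.1 ∩ Epath p'.1.1, Zmat e p.1.2 p'.1.2 := by
  have hEsub : ∀ k, Epath k ⊆ G.edgeFinset := fun k e he => by
    rw [hE, List.mem_toFinset] at he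
    exact SimpleGraph.mem_edgeFinset.mpr ((P k).edges_subset_edgeSet he)
  have hBrow : ∀ p (f : Sym2 V × Fin 3 → ℂ),
      ∑ q, Bhat p q * f q.1 = -∑ e ∈ Epath p.1.1, f (e, p.1.2) := fun p f => by
    simp only [hB, ite_mul, neg_one_mul, zero_mul]
    rw [sum_subtype_pairs_ite_fst_mem _ _ Me _ (hEsub _) (hMono _ _ p.2.2) (fun q => -f q),
      sum_neg_distrib]
  intro p p'
  have hBD : ∀ q', ∑ q, Bhat p q * Dinv q q' =
      -(if q'.1.1 ∈ Epath p.1.1 then Zmat q'.1.1 p.1.2 q'.1.2 else 0) := fun q' => by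
    simp only [hDinv]
    rw [hBrow p fun q => if q.1 = q'.1.1 then Zmat q.1 q.2 q'.1.2 else 0, sum_ite_eq']
  calc (Bhat * Dinv * Bhat.transpose) p p'
      = ∑ q', Bhat p' q' * ∑ q, Bhat p q * Dinv q q' := by
        simp only [Matrix.mul_apply, Matrix.transpose_apply, mul_comm]
    _ = ∑ e ∈ Epath p'.1.1, if e ∈ Epath p.1.1 then Zmat e p.1.2 p'.1.2 else 0 := by
        simp only [hBD]
        rw [hBrow p' fun q => -(if q.1 ∈ Epath p.1.1 then Zmat q.1 p.1.2 q.2 else 0),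
          sum_neg_distrib, neg_neg]
    _ = ∑ e ∈ Epath p.1.1 ∩ Epath p'.1.1, Zmat e p.1.2 p'.1.2 := by
        rw [sum_ite_mem, inter_comm]

/-- The entries of `Ẑ = B̂ D̂⁻¹ B̂ᵀ` are sums of line impedances over
common root paths: `Ẑ_{(i,φ),(j,ψ)} = Σ_{e ∈ E_i ∩ E_j} (Z_e)_{φψ}`, where
`(Z_e)_{φψ}` is taken to be `0` whenever `φ ∉ M_e` or `ψ ∉ M_e`. -/
theorem Zhat_entries_eq_common_path_impedance
    {V : Type*} [Fintype V] [DecidableEq V]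
    (G : SimpleGraph V) [DecidableRel G.Adj] (hG : G.IsTree) (r : V)
    -- the unique path from each node to the root, and its edge set `E_i`
    (P : ∀ i : V, G.Walk i r) (hP : ∀ i, (P i).IsPath)
    (Epath : V → Finset (Sym2 V)) (hE : ∀ i, Epath i = (P i).edges.toFinset)
    -- phase sets of nodes and edges
    (Mn : V → Finset (Fin 3)) (Me : Sym2 V → Finset (Fin 3))
    (hMr : Mn r = Finset.univ)
    (hMono : ∀ i : V, ∀ φ ∈ Mn i, ∀ e ∈ Epath i, φ ∈ Me e)
    -- line admittance matrices `Y_e` and their inverses `Z_e = Y_e⁻¹`,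
    -- supported on the edge phase sets and mutually inverse there
    (Ymat Zmat : Sym2 V → Matrix (Fin 3) (Fin 3) ℂ)
    (hYsupp : ∀ e φ ψ, (φ ∉ Me e ∨ ψ ∉ Me e) → Ymat e φ ψ = 0)
    (hZsupp : ∀ e φ ψ, (φ ∉ Me e ∨ ψ ∉ Me e) → Zmat e φ ψ = 0)
    (hYZ : ∀ e ∈ G.edgeFinset, ∀ φ ψ : Fin 3,
      (∑ χ, Ymat e φ χ * Zmat e χ ψ) = if φ = ψ ∧ φ ∈ Me e then 1 else 0)
    (hZY : ∀ e ∈ G.edgeFinset, ∀ φ ψ : Fin 3,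
      (∑ χ, Zmat e φ χ * Ymat e χ ψ) = if φ = ψ ∧ φ ∈ Me e then 1 else 0)
    -- the matrix B̂
    (Bhat : Matrix {p : V × Fin 3 // p.1 ≠ r ∧ p.2 ∈ Mn p.1}
      {q : Sym2 V × Fin 3 // q.1 ∈ G.edgeFinset ∧ q.2 ∈ Me q.1} ℂ)
    (hB : ∀ p q, Bhat p q =
      if p.1.2 = q.1.2 ∧ q.1.1 ∈ Epath p.1.1 then -1 else 0)
    -- the block-diagonal matrix D̂⁻¹ of line impedances
    (Dinv : Matrix {q : Sym2 V × Fin 3 // q.1 ∈ G.edgeFinset ∧ q.2 ∈ Me q.1}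
      {q : Sym2 V × Fin 3 // q.1 ∈ G.edgeFinset ∧ q.2 ∈ Me q.1} ℂ)
    (hDinv : ∀ q q', Dinv q q' =
      if q.1.1 = q'.1.1 then Zmat q.1.1 q.1.2 q'.1.2 else 0) :
    ∀ p p' : {p : V × Fin 3 // p.1 ≠ r ∧ p.2 ∈ Mn p.1},
      (Bhat * Dinv * Bhat.transpose) p p' =
        ∑ e ∈ Epath p.1.1 ∩ Epath p'.1.1, Zmat e p.1.2 p'.1.2 :=
  Zhat_entries_eq_common_path_impedance_general G r P Epath hE Mn Me hMono Zmat Bhat hB Dinv hDinv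
end

section
/- (Case A) Let i, j, k be distinct non-root nodes such that j lies on the path from i to r, j lies on the path from k to r, and E_i ∩ E_k = E_j (the root paths of i and k merge at j), and let φ ∈ M_i ∩ M_j ∩ M_k. Then d_ij^φ < d_ik^φ and d_kj^φ < d_ik^φ. -/
/-!
For each node `n`, the root path of `n` meets the root paths of `i` and `k` in nested edge sets,
so it cannot enter both branches below the merge point `j`. Hence for every `n` one of
`Ẑ_{(i,φ),(n,ψ)}`, `Ẑ_{(k,φ),(n,ψ)}` equals `Ẑ_{(j,φ),(n,ψ)}`, and termwise this gives the
Pythagorean identity `d_ik^φ = d_ij^φ + d_kj^φ`. Both summands are positive: in `d_xj^φ` the term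
`n = x` compares the path impedances `e_x^{φψ}` and `e_j^{φψ}`, which differ for some `ψ` by
non-degeneracy.
-/

open Finset

namespace SimpleGraph.IsAcyclic

variable {V : Type*} {G : SimpleGraph V} {r : V} {P : ∀ v, G.Walk v r}

theorem eq_of_isPath (hG : G.IsAcyclic) (hP : ∀ v, (P v).IsPath) {x : V} {q : G.Walk x r}
    (hq : q.IsPath) : q = P x :=
  congrArg Subtype.val ((hG.subsingleton_path x r).elim ⟨q, hq⟩ ⟨P x, hP x⟩)

theorem edges_subset_of_mem_support [DecidableEq V] (hG : G.IsAcyclic) (hP : ∀ v, (P v).IsPath)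
    {a y : V} (hy : y ∈ (P a).support) : (P y).edges ⊆ (P a).edges := by
  rw [← hG.eq_of_isPath hP ((hP a).dropUntil hy)]
  exact (P a).edges_dropUntil_subset_edges hy

theorem mem_edges_or_mem_edges_of_isPath [DecidableEq V] (hG : G.IsAcyclic)
    (hP : ∀ v, (P v).IsPath) {x : V} {p : G.Walk x r} (hp : p.IsPath) {a b : V}
    {e₁ e₂ : Sym2 V} (h₁ : e₁ ∈ p.edges) (h₂ : e₂ ∈ p.edges) (ha : e₁ ∈ (P a).edges)
    (hb : e₂ ∈ (P b).edges) : e₂ ∈ (P a).edges ∨ e₁ ∈ (P b).edges := by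
  induction p with
  | nil => simp at h₁
  | @cons x v _ hxv q ih =>
    -- The first edge of `p = P x` lies on `P c` only if `x` does, and then all of `p` does.
    have hfirst : ∀ c, s(x, v) ∈ (P c).edges → ∀ e ∈ (Walk.cons hxv q).edges, e ∈ (P c).edges :=
      fun c hc => hG.eq_of_isPath hP hp ▸
        hG.edges_subset_of_mem_support hP ((P c).fst_mem_support_of_mem_edges hc)
    rw [Walk.edges_cons, List.mem_cons] at h₁ h₂
    rcases h₁ with rfl | h₁
    · exact .inl (hfirst a ha e₂ (by simp [h₂]))
    rcases h₂ with rfl | h₂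
    · exact .inr (hfirst b hb e₁ (by simp [h₁]))
    exact ih hP hp.of_cons h₁ h₂ ha hb

theorem edges_inter_total [DecidableEq V] (hG : G.IsAcyclic) (hP : ∀ v, (P v).IsPath)
    (a b n : V) :
    (P a).edges.toFinset ∩ (P n).edges.toFinset ⊆ (P b).edges.toFinset ∩ (P n).edges.toFinset ∨
      (P b).edges.toFinset ∩ (P n).edges.toFinset ⊆
        (P a).edges.toFinset ∩ (P n).edges.toFinset := by
  by_contra! h
  obtain ⟨e₁, he₁, he₁'⟩ := not_subset.1 h.1
  obtain ⟨e₂, he₂, he₂'⟩ := not_subset.1 h.2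
  simp only [mem_inter, List.mem_toFinset, not_and] at he₁ he₁' he₂ he₂'
  rcases hG.mem_edges_or_mem_edges_of_isPath hP (hP n) he₁.2 he₂.2 he₁.1 he₂.1 with h | h
  · exact he₂' h he₂.2
  · exact he₁' h he₁.2

end SimpleGraph.IsAcyclic

theorem Finset.inter_eq_of_inter_subset_inter {α : Type*} [DecidableEq α] {s t u m : Finset α}
    (hm : s ∩ t = m) (h : s ∩ u ⊆ t ∩ u) : s ∩ u = m ∩ u := by
  rw [← hm, inter_right_comm, inter_eq_left.2 fun e he => (mem_inter.1 (h he)).1]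

theorem norm_sub_sq_eq_add_of_eq_or_eq {E : Type*} [SeminormedAddCommGroup E] {x y z : E}
    (h : x = z ∨ y = z) : ‖x - y‖ ^ 2 = ‖x - z‖ ^ 2 + ‖y - z‖ ^ 2 := by
  rcases h with rfl | rfl
  · rw [sub_self, norm_zero, norm_sub_rev]; ring
  · rw [sub_self, norm_zero]; ring

theorem sum_sum_mul_norm_sq_pos {ι κ E : Type*} [SeminormedAddCommGroup E] {s : Finset ι}
    {t : ι → Finset κ} {w : ι → ℝ} {f : ι → κ → E} (hw : ∀ m ∈ s, 0 ≤ w m) {n : ι} (hn : n ∈ s)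
    {ψ : κ} (hψ : ψ ∈ t n) (hwn : 0 < w n) (hf : 0 < ‖f n ψ‖) :
    0 < ∑ m ∈ s, ∑ χ ∈ t m, w m * ‖f m χ‖ ^ 2 := by
  have hterm : ∀ m ∈ s, ∀ χ ∈ t m, 0 ≤ w m * ‖f m χ‖ ^ 2 := fun m hm χ _ =>
    mul_nonneg (hw m hm) (by positivity)
  refine sum_pos' (fun m hm => sum_nonneg (hterm m hm)) ⟨n, hn, ?_⟩
  exact sum_pos' (hterm n hn) ⟨ψ, hψ, by positivity⟩

theorem caseA_parent_child_strict_general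
    {V : Type*} [Fintype V] [DecidableEq V]
    (G : SimpleGraph V) (hG : G.IsTree) (r : V)
    -- the unique path from each node to the root, and its edge set `E_i`
    (P : ∀ i : V, G.Walk i r) (hP : ∀ i, (P i).IsPath)
    (Epath : V → Finset (Sym2 V)) (hE : ∀ i, Epath i = (P i).edges.toFinset)
    -- phase sets of nodes and edges
    (Mn : V → Finset (Fin 3))
    -- line impedance matrices, supported on the edge phase sets
    (Zmat : Sym2 V → Matrix (Fin 3) (Fin 3) ℂ)
    -- `Ẑ_{(i,φ),(n,ψ)} = Σ_{e ∈ E_i ∩ E_n} (Z_e)_{φψ}`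
    (Zhat : V → Fin 3 → V → Fin 3 → ℂ)
    (hZhat : ∀ i φ n ψ, Zhat i φ n ψ = ∑ e ∈ Epath i ∩ Epath n, Zmat e φ ψ)
    -- path impedances `e_n^{φψ} = Σ_{e ∈ E_n} (Z_e)_{φψ}`
    (epath : V → Fin 3 → Fin 3 → ℂ)
    (hepath : ∀ n φ ψ, epath n φ ψ = ∑ e ∈ Epath n, Zmat e φ ψ)
    -- injection variances, positive at every non-root node
    (s2 : V → ℝ) (hs2 : ∀ n : V, n ≠ r → 0 < s2 n)
    -- the distance `d_ij^φ`
    (d : V → V → Fin 3 → ℝ)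
    (hd : ∀ i j φ, d i j φ = ∑ n ∈ Finset.univ.erase r, ∑ ψ ∈ Mn n,
      s2 n * ‖Zhat i φ n ψ - Zhat j φ n ψ‖ ^ 2)
    -- the phase `φ` and the non-degeneracy assumption for it
    (φ : Fin 3)
    (hnd : ∀ m n : V, m ≠ n → m ∈ (P n).support →
      ∃ ψ ∈ Mn n, epath m φ ψ ≠ epath n φ ψ)
    -- Case A configuration
    (i j k : V) (hir : i ≠ r) (hkr : k ≠ r)
    (hij : i ≠ j) (hjk : j ≠ k)
    (hji : j ∈ (P i).support) (hjk' : j ∈ (P k).support)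
    (hmerge : Epath i ∩ Epath k = Epath j) :
    d i j φ < d i k φ ∧ d k j φ < d i k φ := by
  have hZ : ∀ n ψ, Zhat i φ n ψ = Zhat j φ n ψ ∨ Zhat k φ n ψ = Zhat j φ n ψ := by
    intro n ψ
    simp only [hZhat]
    rcases hG.isAcyclic.edges_inter_total hP i k n with h | h <;> simp only [← hE] at h
    · rw [inter_eq_of_inter_subset_inter hmerge h]; exact .inl rfl
    · rw [inter_eq_of_inter_subset_inter (inter_comm (Epath k) _ ▸ hmerge) h]; exact .inr rfl
  have hsum : d i k φ = d i j φ + d k j φ := by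
    simp only [hd, ← sum_add_distrib]
    refine sum_congr rfl fun n _ => sum_congr rfl fun ψ _ => ?_
    rw [← mul_add, norm_sub_sq_eq_add_of_eq_or_eq (hZ n ψ)]
  have hpos : ∀ x, x ≠ r → x ≠ j → j ∈ (P x).support → Epath j ⊆ Epath x → 0 < d x j φ := by
    intro x hxr hxj hjx hEjx
    obtain ⟨ψ, hψ, hne⟩ := hnd j x hxj.symm hjx
    rw [hd]
    refine sum_sum_mul_norm_sq_pos (fun m hm => (hs2 m (ne_of_mem_erase hm)).le)
      (mem_erase.2 ⟨hxr, mem_univ x⟩) hψ (hs2 x hxr) (norm_pos_iff.2 ?_)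
    rw [hZhat, hZhat, inter_self, inter_eq_left.2 hEjx, ← hepath, ← hepath]
    exact sub_ne_zero.2 hne.symm
  have hdij := hpos i hir hij hji (hmerge ▸ inter_subset_left)
  have hdkj := hpos k hkr hjk.symm hjk' (hmerge ▸ inter_subset_right)
  constructor <;> linarith

/-- **Case A.** If `j` lies on the root paths of both `i` and `k`, and
the root paths of `i` and `k` merge exactly at `j` (`E_i ∩ E_k = E_j`), then for any
phase `φ ∈ M_i ∩ M_j ∩ M_k` we have `d_ij^φ < d_ik^φ` and `d_kj^φ < d_ik^φ`. -/
theorem caseA_parent_child_strict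
    {V : Type*} [Fintype V] [DecidableEq V]
    (G : SimpleGraph V) [DecidableRel G.Adj] (hG : G.IsTree) (r : V)
    -- the unique path from each node to the root, and its edge set `E_i`
    (P : ∀ i : V, G.Walk i r) (hP : ∀ i, (P i).IsPath)
    (Epath : V → Finset (Sym2 V)) (hE : ∀ i, Epath i = (P i).edges.toFinset)
    -- phase sets of nodes and edges
    (Mn : V → Finset (Fin 3)) (Me : Sym2 V → Finset (Fin 3))
    (hMr : Mn r = Finset.univ)
    (hMono : ∀ i : V, ∀ φ ∈ Mn i, ∀ e ∈ Epath i, φ ∈ Me e)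
    -- line impedance matrices, supported on the edge phase sets
    (Zmat : Sym2 V → Matrix (Fin 3) (Fin 3) ℂ)
    (hZsupp : ∀ e φ ψ, (φ ∉ Me e ∨ ψ ∉ Me e) → Zmat e φ ψ = 0)
    -- `Ẑ_{(i,φ),(n,ψ)} = Σ_{e ∈ E_i ∩ E_n} (Z_e)_{φψ}`
    (Zhat : V → Fin 3 → V → Fin 3 → ℂ)
    (hZhat : ∀ i φ n ψ, Zhat i φ n ψ = ∑ e ∈ Epath i ∩ Epath n, Zmat e φ ψ)
    -- path impedances `e_n^{φψ} = Σ_{e ∈ E_n} (Z_e)_{φψ}`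
    (epath : V → Fin 3 → Fin 3 → ℂ)
    (hepath : ∀ n φ ψ, epath n φ ψ = ∑ e ∈ Epath n, Zmat e φ ψ)
    -- injection variances, positive at every non-root node
    (s2 : V → ℝ) (hs2 : ∀ n : V, n ≠ r → 0 < s2 n)
    -- the distance `d_ij^φ`
    (d : V → V → Fin 3 → ℝ)
    (hd : ∀ i j φ, d i j φ = ∑ n ∈ Finset.univ.erase r, ∑ ψ ∈ Mn n,
      s2 n * ‖Zhat i φ n ψ - Zhat j φ n ψ‖ ^ 2)
    -- the phase `φ` and the non-degeneracy assumption for it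
    (φ : Fin 3)
    (hnd : ∀ m n : V, m ≠ n → m ∈ (P n).support →
      ∃ ψ ∈ Mn n, epath m φ ψ ≠ epath n φ ψ)
    -- Case A configuration
    (i j k : V) (hir : i ≠ r) (hjr : j ≠ r) (hkr : k ≠ r)
    (hij : i ≠ j) (hik : i ≠ k) (hjk : j ≠ k)
    (hji : j ∈ (P i).support) (hjk' : j ∈ (P k).support)
    (hmerge : Epath i ∩ Epath k = Epath j)
    (hφ : φ ∈ Mn i ∧ φ ∈ Mn j ∧ φ ∈ Mn k) :
    d i j φ < d i k φ ∧ d k j φ < d i k φ :=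
  caseA_parent_child_strict_general G hG r P hP Epath hE Mn Zmat Zhat hZhat epath hepath s2 hs2 d hd
    φ hnd i j k hir hkr hij hjk hji hjk' hmerge
end

section
/- (Single-phase version) Let G be a finite tree on vertex set N with root r, with a nonzero complex admittance y_e on each edge. Let A be the reduced incidence matrix (rows indexed by N \ {r}, columns by edges, with A_{i,e} = 1 and A_{j,e} = −1 for an edge e oriented from i to j, entries at r deleted), and let D = diag(y_e). Then the reduced admittance matrix Y = A D A^T is invertible and its inverse Z satisfies Z_{i,j} = Σ_{e ∈ E_i ∩ E_j} y_e^{-1} for all non-root nodes i, j, where E_i is the edge set of the unique path from i to r. -/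
/-!
Let `M` be the edge–path matrix, `M e j = 1` if `e ∈ E_j` and `0` otherwise. Since `E_j` is the
edge set of the root path of `j`, summing the incidence coefficients of a node along it
telescopes, so `A * M = -1`; and since the root path of a child is that of its parent plus the
connecting edge, `M * A = -1`. Hence `A * D * Aᵀ` has the inverse `Mᵀ * D⁻¹ * M`, whose
`(i, j)` entry is `∑ e ∈ E_i ∩ E_j, y_e⁻¹`.
-/

open Finset
open scoped Matrix

section RootedPathSystem

variable {V α : Type*} [DecidableEq α]

/-- `E j` stands for the edge set of the path from `j` to the root `r`, and each edge `e ∈ s`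
is oriented away from the root, from `par e` to `chi e`. -/
structure IsRootedPathSystem (s : Finset α) (r : V) (par chi : α → V) (E : V → Finset α) :
    Prop where
  root_eq_empty : E r = ∅
  subset : ∀ j, E j ⊆ s
  chi_eq_insert : ∀ e ∈ s, E (chi e) = insert e (E (par e))
  notMem_par : ∀ e ∈ s, e ∉ E (par e)
  exists_chi_eq : ∀ j ≠ r, ∃ e ∈ s, chi e = j

def pathMatrix (R : Type*) [Ring R] (s : Finset α) (r : V) (E : V → Finset α) :
    Matrix s {i // i ≠ r} R :=
  Matrix.of fun e j => if (e : α) ∈ E j then 1 else 0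

variable [DecidableEq V]

def incidenceCoeff {R : Type*} [Ring R] (par chi : α → V) (i : V) (e : α) : R :=
  if i = par e then 1 else if i = chi e then -1 else 0

def reducedIncidence (R : Type*) [Ring R] (s : Finset α) (r : V) (par chi : α → V) :
    Matrix {i // i ≠ r} s R :=
  Matrix.of fun i e => incidenceCoeff par chi i e

end RootedPathSystem

namespace IsRootedPathSystem

variable {V α R : Type*} [DecidableEq α] [Ring R]
  {s : Finset α} {r : V} {par chi : α → V} {E : V → Finset α}

theorem par_ne_chi (h : IsRootedPathSystem s r par chi E) {e : α} (he : e ∈ s) :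
    par e ≠ chi e := by
  intro hpc
  have := h.chi_eq_insert e he
  rw [← hpc] at this
  exact h.notMem_par e he (this ▸ mem_insert_self e _)

theorem pathMatrix_transpose_mul_diagonal_mul_apply (h : IsRootedPathSystem s r par chi E)
    (d : α → R) (i j : {i // i ≠ r}) :
    ((pathMatrix R s r E)ᵀ * Matrix.diagonal (fun e : s => d e) * pathMatrix R s r E) i j =
      ∑ e ∈ E i ∩ E j, d e := by
  rw [Matrix.mul_apply]
  simp only [Matrix.mul_diagonal, Matrix.transpose_apply, pathMatrix, Matrix.of_apply, ite_mul,
    one_mul, zero_mul, mul_ite, mul_one, mul_zero, ← ite_and, ← mem_inter]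
  rw [sum_coe_sort s fun e => if e ∈ E j ∩ E i then d e else 0, sum_ite_mem, inter_comm (E j),
    inter_eq_right.2 (inter_subset_left.trans (h.subset i))]

variable [DecidableEq V]

theorem incidenceCoeff_eq_sub (h : IsRootedPathSystem s r par chi E) {e : α}
    (he : e ∈ s) (i : V) :
    (incidenceCoeff par chi i e : R) =
      (if i = par e then 1 else 0) - if i = chi e then 1 else 0 := by
  unfold incidenceCoeff
  by_cases hp : i = par e
  · simp [hp, h.par_ne_chi he]
  · simp only [if_neg hp]
    split_ifs <;> simp

theorem sum_incidenceCoeff (h : IsRootedPathSystem s r par chi E) {i : V} (hi : i ≠ r)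
    (j : V) : ∑ e ∈ E j, (incidenceCoeff par chi i e : R) = if i = j then -1 else 0 := by
  induction hn : (E j).card using Nat.strong_induction_on generalizing j with
  | _ n ih =>
  by_cases hj : j = r
  · simp [hj, h.root_eq_empty, hi]
  obtain ⟨e, he, rfl⟩ := h.exists_chi_eq j hj
  have hcard : (E (par e)).card < n := by
    rw [← hn, h.chi_eq_insert e he, card_insert_of_notMem (h.notMem_par e he)]
    omega
  rw [h.chi_eq_insert e he, sum_insert (h.notMem_par e he), ih _ hcard _ rfl,
    h.incidenceCoeff_eq_sub he]
  have := h.par_ne_chi he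
  split_ifs <;> simp_all

theorem reducedIncidence_mul_pathMatrix [Fintype V]
    (h : IsRootedPathSystem s r par chi E) :
    reducedIncidence R s r par chi * pathMatrix R s r E = -1 := by
  ext i j
  simp only [Matrix.mul_apply, reducedIncidence, pathMatrix, Matrix.of_apply, mul_ite, mul_one,
    mul_zero]
  rw [sum_coe_sort s fun e => if e ∈ E j then (incidenceCoeff par chi i e : R) else 0,
    sum_ite_mem, inter_eq_right.2 (h.subset j), h.sum_incidenceCoeff i.2]
  simp only [Matrix.neg_apply, Matrix.one_apply, Subtype.ext_iff]
  split_ifs <;> simp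

theorem pathMatrix_mul_reducedIncidence [Fintype V]
    (h : IsRootedPathSystem s r par chi E) :
    pathMatrix R s r E * reducedIncidence R s r par chi = -1 := by
  ext e f
  -- the summand vanishes at the root because `E r = ∅`
  have hsum := Fintype.sum_eq_add_sum_subtype_ne
    (fun i => (if (e : α) ∈ E i then 1 else 0) * (incidenceCoeff par chi i f : R)) r
  simp only [h.root_eq_empty, notMem_empty, if_false, zero_mul, zero_add] at hsum
  simp only [Matrix.mul_apply, reducedIncidence, pathMatrix, Matrix.of_apply]
  rw [← hsum]
  simp only [h.incidenceCoeff_eq_sub f.2, mul_sub, mul_ite, mul_one, mul_zero, sum_sub_distrib,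
    sum_ite_eq', mem_univ, if_true, h.chi_eq_insert f f.2, mem_insert, Matrix.neg_apply,
    Matrix.one_apply, Subtype.ext_iff]
  by_cases hef : (e : α) = f
  · simp [hef, h.notMem_par f f.2]
  · simp [hef]

end IsRootedPathSystem

theorem Matrix.mul_mul_transpose_mul_eq_one {m n R : Type*} [Fintype m] [Fintype n]
    [DecidableEq m] [DecidableEq n] [CommRing R] {A : Matrix n m R} {M : Matrix m n R}
    {D D' : Matrix m m R} (hAM : A * M = -1) (hMA : M * A = -1) (hD : D * D' = 1) :
    A * D * Aᵀ * (Mᵀ * D' * M) = 1 :=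
  calc A * D * Aᵀ * (Mᵀ * D' * M) = A * D * (M * A)ᵀ * D' * M := by
        simp only [Matrix.transpose_mul, Matrix.mul_assoc]
    _ = -(A * M) := by
        rw [hMA, Matrix.transpose_neg, Matrix.transpose_one, Matrix.mul_neg, Matrix.mul_one,
          Matrix.neg_mul, Matrix.neg_mul, Matrix.mul_assoc A D D', hD, Matrix.mul_one]
    _ = 1 := by rw [hAM, neg_neg]

namespace SimpleGraph

variable {V : Type*} {G : SimpleGraph V}

theorem IsAcyclic.exists_eq_cons_of_ne (hG : G.IsAcyclic) {r : V} (P : ∀ i, G.Walk i r)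
    (hP : ∀ i, (P i).IsPath) {j : V} (hj : j ≠ r) :
    ∃ v, ∃ h : G.Adj j v, P j = .cons h (P v) := by
  have hPj := hP j
  generalize P j = p at hPj ⊢
  cases p with
  | nil => exact absurd rfl hj
  | cons h w =>
    refine ⟨_, h, ?_⟩
    have hw : (⟨w, ((Walk.cons_isPath_iff h w).1 hPj).1⟩ : G.Path _ r) = ⟨_, hP _⟩ :=
      (hG.subsingleton_path _ _).elim _ _
    exact congrArg (Walk.cons h) (congrArg Subtype.val hw)

theorem IsAcyclic.isRootedPathSystem [Fintype V] [DecidableEq V] [DecidableRel G.Adj]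
    (hG : G.IsAcyclic) {r : V} (P : ∀ i, G.Walk i r) (hP : ∀ i, (P i).IsPath)
    (E : V → Finset (Sym2 V)) (hE : ∀ i, E i = (P i).edges.toFinset) (par chi : Sym2 V → V)
    (hor : ∀ e ∈ G.edgeFinset, e = s(par e, chi e) ∧ e ∉ E (par e) ∧ e ∈ E (chi e)) :
    IsRootedPathSystem G.edgeFinset r par chi E := by
  have eq_insert : ∀ {j v} (h : G.Adj j v), P j = .cons h (P v) →
      E j = insert s(j, v) (E v) := by
    intro j v h hPj
    rw [hE, hE, hPj, Walk.edges_cons, List.toFinset_cons]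
  have root_eq_empty : E r = ∅ := by
    rw [hE, Walk.edges_eq_nil.2 (Walk.isPath_iff_nil.1 (hP r))]
    rfl
  refine ⟨root_eq_empty, fun j e he => ?_, fun e he => ?_, fun e he => (hor e he).2.1,
    fun j hj => ?_⟩
  · rw [hE] at he
    exact mem_edgeFinset.2 ((P j).edges_subset_edgeSet (List.mem_toFinset.1 he))
  · obtain ⟨he_eq, -, he_chi⟩ := hor e he
    have hc : chi e ≠ r := by
      rintro hc
      rw [hc, root_eq_empty] at he_chi
      exact notMem_empty e he_chi
    obtain ⟨v, h, hPc⟩ := hG.exists_eq_cons_of_ne P hP hc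
    have hcv : chi e ∉ (P v).support := by
      have := hP (chi e)
      rw [hPc, Walk.cons_isPath_iff] at this
      exact this.2
    rw [eq_insert h hPc] at he_chi ⊢
    -- `e` is incident to `chi e`, which the path from `v` avoids, so `e` is the first edge
    have he_first : e = s(chi e, v) := by
      refine (mem_insert.1 he_chi).resolve_right fun he_v => hcv ?_
      rw [hE, he_eq] at he_v
      exact (P v).snd_mem_support_of_mem_edges (List.mem_toFinset.1 he_v)
    have hv : par e = v := by
      have := he_eq.symm.trans he_first
      rw [Sym2.eq_swap] at this
      exact Sym2.congr_right.1 this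
    rw [hv, ← he_first]
  · obtain ⟨v, h, hPj⟩ := hG.exists_eq_cons_of_ne P hP hj
    have he : s(j, v) ∈ G.edgeFinset := mem_edgeFinset.2 h
    obtain ⟨he_eq, he_par, -⟩ := hor _ he
    refine ⟨_, he, ?_⟩
    rcases Sym2.eq_iff.1 he_eq with ⟨hjp, -⟩ | ⟨hjc, -⟩
    · rw [← hjp, eq_insert h hPj] at he_par
      exact absurd (mem_insert_self _ _) he_par
    · exact hjc.symm

end SimpleGraph

/-- **single-phase version.** For a finite tree with root `r` and a
nonzero complex admittance `y_e` on each edge, with `A` the reduced incidence matrix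
and `D = diag(y_e)`, the reduced admittance matrix `Y = A D Aᵀ` is invertible and its
inverse `Z` satisfies `Z_{i,j} = Σ_{e ∈ E_i ∩ E_j} y_e⁻¹` for all non-root nodes
`i, j`, where `E_i` is the edge set of the unique path from `i` to `r`. -/
theorem single_phase_reduced_admittance_inverse
    {V : Type*} [Fintype V] [DecidableEq V]
    (G : SimpleGraph V) [DecidableRel G.Adj] (hG : G.IsTree) (r : V)
    -- the unique path from each node to the root, and its edge set `E_i`
    (P : ∀ i : V, G.Walk i r) (hP : ∀ i, (P i).IsPath)
    (Epath : V → Finset (Sym2 V)) (hE : ∀ i, Epath i = (P i).edges.toFinset)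
    -- nonzero edge admittances
    (y : Sym2 V → ℂ) (hy : ∀ e ∈ G.edgeFinset, y e ≠ 0)
    -- orientation of each edge away from the root: from parent `par e` to child `chi e`
    (par chi : Sym2 V → V)
    (hor : ∀ e ∈ G.edgeFinset,
      e = s(par e, chi e) ∧ e ∉ Epath (par e) ∧ e ∈ Epath (chi e))
    -- the reduced incidence matrix `A`
    (A : Matrix {i : V // i ≠ r} {e : Sym2 V // e ∈ G.edgeFinset} ℂ)
    (hA : ∀ i e, A i e =
      if (i : V) = par (e : Sym2 V) then 1
      else if (i : V) = chi (e : Sym2 V) then -1 else 0)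
    -- the diagonal matrix of edge admittances `D`
    (D : Matrix {e : Sym2 V // e ∈ G.edgeFinset} {e : Sym2 V // e ∈ G.edgeFinset} ℂ)
    (hD : ∀ e f, D e f = if e = f then y e else 0) :
    IsUnit (A * D * A.transpose) ∧
      ∀ i j : {i : V // i ≠ r},
        (A * D * A.transpose)⁻¹ i j = ∑ e ∈ Epath (i : V) ∩ Epath (j : V), (y e)⁻¹ := by
  have hS := hG.isAcyclic.isRootedPathSystem P hP Epath hE par chi hor
  obtain rfl : A = reducedIncidence ℂ G.edgeFinset r par chi := Matrix.ext hA
  obtain rfl : D = Matrix.diagonal fun e : G.edgeFinset => y e :=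
    Matrix.ext fun e f => by rw [hD, Matrix.diagonal_apply]
  have hDD : (Matrix.diagonal fun e : G.edgeFinset => y e) *
      Matrix.diagonal (fun e : G.edgeFinset => (y e)⁻¹) = 1 := by
    rw [Matrix.diagonal_mul_diagonal, ← Matrix.diagonal_one]
    exact congrArg Matrix.diagonal (funext fun e => mul_inv_cancel₀ (hy e e.2))
  have hZ := Matrix.mul_mul_transpose_mul_eq_one hS.reducedIncidence_mul_pathMatrix
    hS.pathMatrix_mul_reducedIncidence hDD
  refine ⟨IsUnit.of_mul_eq_one _ hZ, fun i j => ?_⟩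
  rw [Matrix.inv_eq_right_inv hZ,
    hS.pathMatrix_transpose_mul_diagonal_mul_apply fun e => (y e)⁻¹]
end
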